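/- Let C be a small category. The nerve N(C), viewed as a simplicial set, satisfies the Segal condition: for all m, n ≥ 0 the canonical map N(C)_{m+n} → N(C)_m ×_{N(C)_0} N(C)_n is a bijection. Conversely, any simplicial set satisfying this Segal condition is isomorphic to the nerve of a category. -/

import Mathlib

/-!
Both directions go through Mathlib's strict Segal condition: every `n`-simplex is determined by
its spine, and every path of `n` edges is a spine. Since `iota1 m n` and `iota2 m n` are the
subintervals `[0, m]` and `[m, m + n]`, the Segal map of a strict Segal simplicial set (such as
a nerve) is the restriction of paths of length `m + n` to their two halves, which is inverted by
concatenation of paths with matching endpoint. Conversely, the case `m = 1` of the Segal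
condition is the inductive step `StrictSegalCore` of the strict Segal condition.

For strict Segal `X`, the composite of edges `f`, `g` is the edge `0 ⟶ 2` of the unique
2-simplex with spine `(f, g)`. Uniqueness of such fillers gives the unit laws (from degenerate
2-simplices) and associativity (from a 3-simplex), and an `n`-simplex is then the same as a
string of `n` composable edges, naturally in `⦋n⦌`.
-/

open CategoryTheory Opposite

universe u v

/-- The inclusion `[m] → [m+n]`, `(0 < ⋯ < m) ↦ (0 < ⋯ < m)`. -/
def iota1 (m n : ℕ) : SimplexCategory.mk m ⟶ SimplexCategory.mk (m + n) :=
  SimplexCategory.Hom.mk ⟨fun i => Fin.castLE (by simp only [SimplexCategory.len_mk]; omega) i, fun _ _ h => h⟩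

/-- The inclusion `[n] → [m+n]`, `(0 < ⋯ < n) ↦ (m < ⋯ < m+n)`. -/
def iota2 (m n : ℕ) : SimplexCategory.mk n ⟶ SimplexCategory.mk (m + n) :=
  SimplexCategory.Hom.mk ⟨fun i => ⟨m + i.1, by simp only [SimplexCategory.len_mk]; omega⟩, fun i j h => by
    simp only [Fin.mk_le_mk]
    exact Nat.add_le_add_left h m⟩

/-- The Segal map `X_{m+n} → X_m × X_n` of a simplicial set, whose corestriction to the
fiber product `X_m ×_{X_0} X_n` is the Segal map. -/
def segalPair (X : SSet.{u}) (m n : ℕ) (σ : X.obj (op (SimplexCategory.mk (m + n)))) :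
    X.obj (op (SimplexCategory.mk m)) × X.obj (op (SimplexCategory.mk n)) :=
  (X.map (iota1 m n).op σ, X.map (iota2 m n).op σ)

/-- The fiber product `X_m ×_{X_0} X_n`: pairs whose last, resp. first, vertices agree. -/
def segalCompatible (X : SSet.{u}) (m n : ℕ) :
    Set (X.obj (op (SimplexCategory.mk m)) × X.obj (op (SimplexCategory.mk n))) :=
  {p | X.map (SimplexCategory.const (SimplexCategory.mk 0) (SimplexCategory.mk m)
        (Fin.last m)).op p.1 =
      X.map (SimplexCategory.const (SimplexCategory.mk 0) (SimplexCategory.mk n) 0).op p.2}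

/-- A simplicial set satisfies the Segal condition if, for all `m, n ≥ 0`, the canonical map
`X_{m+n} → X_m ×_{X_0} X_n` is a bijection. -/
def SatisfiesSegal (X : SSet.{u}) : Prop :=
  ∀ m n : ℕ, Function.Injective (segalPair X m n) ∧
    Set.range (segalPair X m n) = segalCompatible X m n

open SSet SimplexCategory Simplicial

namespace SimplexCategory

lemma mkOfSucc_zero_eq_subinterval (n : ℕ) :
    mkOfSucc (0 : Fin (n + 1)) = subinterval 0 1 (by omega) := by
  ext i
  fin_cases i <;> rfl

lemma δ_zero_eq_subinterval (n : ℕ) : δ (0 : Fin (n + 2)) = subinterval 1 n (by omega) := by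
  ext i
  simp [δ, subinterval, Fin.succAbove]
  rfl

lemma δ_one_comp_mkOfLe {n : ℕ} (i j : Fin (n + 1)) (h : i ≤ j) :
    δ 1 ≫ mkOfLe i j h = const ⦋0⦌ ⦋n⦌ i :=
  Hom.ext_zero_left _ _

lemma δ_zero_comp_mkOfLe {n : ℕ} (i j : Fin (n + 1)) (h : i ≤ j) :
    δ 0 ≫ mkOfLe i j h = const ⦋0⦌ ⦋n⦌ j :=
  Hom.ext_zero_left _ _

lemma σ_zero_comp_const {n : ℕ} (i : Fin (n + 1)) : σ 0 ≫ const ⦋0⦌ ⦋n⦌ i = const ⦋1⦌ ⦋n⦌ i :=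
  Hom.ext_one_left _ _

lemma mkOfLe_comp {m n : ℕ} (α : ⦋m⦌ ⟶ ⦋n⦌) (i j : Fin (m + 1)) (h : i ≤ j) :
    mkOfLe i j h ≫ α = mkOfLe (α.toOrderHom i) (α.toOrderHom j) (α.toOrderHom.monotone h) :=
  Hom.ext_one_left _ _

lemma mkOfSucc_eq_mkOfLe {n : ℕ} (i : Fin n) :
    mkOfSucc i = mkOfLe i.castSucc i.succ i.castSucc_le_succ :=
  Hom.ext_one_left _ _

lemma δ_two_comp_mkOfLeComp {n : ℕ} (i j k : Fin (n + 1)) (hij : i ≤ j) (hjk : j ≤ k) :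
    δ 2 ≫ mkOfLeComp i j k hij hjk = mkOfLe i j hij :=
  Hom.ext_one_left _ _

lemma δ_one_comp_mkOfLeComp {n : ℕ} (i j k : Fin (n + 1)) (hij : i ≤ j) (hjk : j ≤ k) :
    δ 1 ≫ mkOfLeComp i j k hij hjk = mkOfLe i k (hij.trans hjk) :=
  Hom.ext_one_left _ _

lemma δ_zero_comp_mkOfLeComp {n : ℕ} (i j k : Fin (n + 1)) (hij : i ≤ j) (hjk : j ≤ k) :
    δ 0 ≫ mkOfLeComp i j k hij hjk = mkOfLe j k hjk :=
  Hom.ext_one_left _ _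

end SimplexCategory

lemma iota1_eq_subinterval (m n : ℕ) : iota1 m n = subinterval 0 m (by omega) := by
  ext i
  rfl

lemma iota2_eq_subinterval (m n : ℕ) : iota2 m n = subinterval m n le_rfl := by
  ext i
  exact Nat.add_comm _ _

namespace SSet

variable {X : SSet.{u}}

lemma δ_map_apply {m n : ℕ} (i : Fin (n + 2)) (f : ⦋n + 1⦌ ⟶ ⦋m⦌) (σ : X _⦋m⦌) :
    X.δ i (X.map f.op σ) = X.map (δ i ≫ f).op σ := by
  rw [op_comp, Functor.map_comp_apply]
  rfl

namespace Path

variable {m n : ℕ}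

def append (a : X.Path m) (b : X.Path n) (h : a.vertex (Fin.last m) = b.vertex 0) :
    X.Path (m + n) where
  vertex := Fin.append (α := X _⦋0⦌) (m := m) (n := n + 1) (fun i ↦ a.vertex i.castSucc) b.vertex
  arrow := Fin.append (α := X _⦋1⦌) a.arrow b.arrow
  arrow_src i := by
    change X.δ 1 _ = _
    refine Fin.addCases (fun k ↦ ?_) (fun k ↦ ?_) i
    · have : (Fin.castAdd n k).castSucc = Fin.castAdd (n + 1) k := rfl
      simp only [Fin.append_left, this]
      exact a.arrow_src k
    · have : (Fin.natAdd m k).castSucc = Fin.natAdd m k.castSucc := rfl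
      simp only [Fin.append_right, this]
      exact b.arrow_src k
  arrow_tgt i := by
    change X.δ 0 _ = _
    refine Fin.addCases (fun k ↦ ?_) (fun k ↦ ?_) i
    · simp only [Fin.append_left]
      rw [a.arrow_tgt k]
      by_cases hk : k.1 + 1 < m
      · have : (Fin.castAdd n k).succ = Fin.castAdd (n + 1) ⟨k + 1, hk⟩ := rfl
        rw [this, Fin.append_left]
        rfl
      · have hlast : k.succ = Fin.last m := Fin.ext (by simp; omega)
        have : (Fin.castAdd n k).succ = Fin.natAdd m (0 : Fin (n + 1)) := Fin.ext (by simp; omega)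
        rw [this, Fin.append_right, hlast, h]
    · have : (Fin.natAdd m k).succ = Fin.natAdd m k.succ := rfl
      simp only [Fin.append_right, this]
      exact b.arrow_tgt k

variable {a : X.Path m} {b : X.Path n} {h : a.vertex (Fin.last m) = b.vertex 0}

lemma append_vertex_left (i : Fin (m + 1)) (j : Fin (m + n + 1)) (hj : j.1 = i.1) :
    (a.append b h).vertex j = a.vertex i := by
  change Fin.append (α := X _⦋0⦌) (m := m) (n := n + 1) (fun i ↦ a.vertex i.castSucc) b.vertex j = _
  by_cases hi : i.1 < m
  · rw [show j = Fin.castAdd (n + 1) ⟨i, hi⟩ from Fin.ext hj, Fin.append_left]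
    rfl
  · rw [show j = Fin.natAdd m (0 : Fin (n + 1)) from Fin.ext (by simp; omega), Fin.append_right,
      ← h, show i = Fin.last m from Fin.ext (by simp; omega)]

lemma append_vertex_right (i : Fin (n + 1)) (j : Fin (m + n + 1)) (hj : j.1 = m + i.1) :
    (a.append b h).vertex j = b.vertex i := by
  change Fin.append (α := X _⦋0⦌) (m := m) (n := n + 1) (fun i ↦ a.vertex i.castSucc) b.vertex j = _
  rw [show j = Fin.natAdd m i from Fin.ext hj, Fin.append_right]

lemma append_arrow_left (i : Fin m) (j : Fin (m + n)) (hj : j.1 = i.1) :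
    (a.append b h).arrow j = a.arrow i := by
  change Fin.append (α := X _⦋1⦌) _ _ _ = _
  rw [show j = Fin.castAdd n i from Fin.ext hj, Fin.append_left]

lemma append_arrow_right (i : Fin n) (j : Fin (m + n)) (hj : j.1 = m + i.1) :
    (a.append b h).arrow j = b.arrow i := by
  change Fin.append (α := X _⦋1⦌) _ _ _ = _
  rw [show j = Fin.natAdd m i from Fin.ext hj, Fin.append_right]

@[simp]
lemma interval_append_left : (a.append b h).interval 0 m = a := by
  ext i
  · exact append_vertex_left (h := h) _ _ (zero_add _)
  · exact append_arrow_left (h := h) _ _ (zero_add _)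

@[simp]
lemma interval_append_right : (a.append b h).interval m n = b := by
  ext i
  · exact append_vertex_right (h := h) _ _ rfl
  · exact append_arrow_right (h := h) _ _ rfl

lemma ext_interval {p q : X.Path (m + n)} (h₁ : p.interval 0 m = q.interval 0 m)
    (h₂ : p.interval m n = q.interval m n) : p = q := by
  ext i
  · by_cases hi : i.1 ≤ m
    · rw [show i = ⟨0 + i, by omega⟩ from Fin.ext (zero_add _).symm]
      exact congr_vertex h₁ ⟨i, by omega⟩
    · rw [show i = ⟨m + (i - m), by omega⟩ from Fin.ext (by simp; omega)]
      exact congr_vertex h₂ ⟨i - m, by omega⟩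
  · by_cases hi : i.1 < m
    · rw [show i = ⟨0 + i, by omega⟩ from Fin.ext (zero_add _).symm]
      exact congr_arrow h₁ ⟨i, hi⟩
    · rw [show i = ⟨m + (i - m), by omega⟩ from Fin.ext (by simp; omega)]
      exact congr_arrow h₂ ⟨i - m, by omega⟩

end Path

section Edge

variable {x₀ x₁ x₂ x₃ : X _⦋0⦌}

def Edge.path₂ (f : Edge x₀ x₁) (g : Edge x₁ x₂) : X.Path 2 where
  vertex := ![x₀, x₁, x₂]
  arrow := ![f.edge, g.edge]
  arrow_src i := by
    change X.δ 1 _ = _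
    fin_cases i
    exacts [f.src_eq, g.src_eq]
  arrow_tgt i := by
    change X.δ 0 _ = _
    fin_cases i
    exacts [f.tgt_eq, g.tgt_eq]

def Edge.path₃ (f : Edge x₀ x₁) (g : Edge x₁ x₂) (h : Edge x₂ x₃) : X.Path 3 where
  vertex := ![x₀, x₁, x₂, x₃]
  arrow := ![f.edge, g.edge, h.edge]
  arrow_src i := by
    change X.δ 1 _ = _
    fin_cases i
    exacts [f.src_eq, g.src_eq, h.src_eq]
  arrow_tgt i := by
    change X.δ 0 _ = _
    fin_cases i
    exacts [f.tgt_eq, g.tgt_eq, h.tgt_eq]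

lemma spine_arrow_zero_eq_δ (s : X _⦋2⦌) : (X.spine 2 s).arrow 0 = X.δ 2 s := by
  rw [spine_arrow, mkOfSucc_zero_eq_δ]
  rfl

lemma spine_arrow_one_eq_δ (s : X _⦋2⦌) : (X.spine 2 s).arrow 1 = X.δ 0 s := by
  rw [spine_arrow, mkOfSucc_one_eq_δ]
  rfl

lemma spine_eq_path₂ {f : Edge x₀ x₁} {g : Edge x₁ x₂} {s : X _⦋2⦌}
    (h₂ : X.δ 2 s = f.edge) (h₀ : X.δ 0 s = g.edge) : X.spine 2 s = f.path₂ g := by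
  ext i
  fin_cases i
  · exact (spine_arrow_zero_eq_δ s).trans h₂
  · exact (spine_arrow_one_eq_δ s).trans h₀

end Edge

end SSet

section Segal

variable {X : SSet.{u}} {m n : ℕ}

lemma spine_segalPair_fst (σ : X _⦋m + n⦌) :
    X.spine m (segalPair X m n σ).1 = (X.spine (m + n) σ).interval 0 m := by
  rw [segalPair, iota1_eq_subinterval]
  exact X.spine_map_subinterval _ _ _ _ σ

lemma spine_segalPair_snd (σ : X _⦋m + n⦌) :
    X.spine n (segalPair X m n σ).2 = (X.spine (m + n) σ).interval m n := by
  rw [segalPair, iota2_eq_subinterval]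
  exact X.spine_map_subinterval _ _ _ _ σ

lemma mem_segalCompatible_iff {a : X _⦋m⦌} {b : X _⦋n⦌} :
    (a, b) ∈ segalCompatible X m n ↔ (X.spine m a).vertex (Fin.last m) = (X.spine n b).vertex 0 :=
  Iff.rfl

lemma segalPair_mem_segalCompatible (σ : X _⦋m + n⦌) :
    segalPair X m n σ ∈ segalCompatible X m n := by
  rw [mem_segalCompatible_iff, spine_segalPair_fst, spine_segalPair_snd]
  exact congrArg (X.spine (m + n) σ).vertex (Fin.ext (by simp))

lemma mem_segalCompatible_of_δ_zero_eq {x : X _⦋1⦌} {s : X _⦋n⦌}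
    (h : X.δ 0 x = X.map (const ⦋0⦌ ⦋n⦌ 0).op s) : (x, s) ∈ segalCompatible X 1 n := by
  rwa [SimplicialObject.δ_def, δ_zero_eq_const] at h

theorem satisfiesSegal_of_isStrictSegal (X : SSet.{u}) [X.IsStrictSegal] : SatisfiesSegal X := by
  intro m n
  have spine_inj {k : ℕ} := (IsStrictSegal.segal (X := X) k).injective
  refine ⟨fun σ τ h ↦ spine_inj (Path.ext_interval ?_ ?_), Set.Subset.antisymm ?_ ?_⟩
  · rw [← spine_segalPair_fst, h, spine_segalPair_fst]
  · rw [← spine_segalPair_snd, h, spine_segalPair_snd]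
  · rintro _ ⟨σ, rfl⟩
    exact segalPair_mem_segalCompatible σ
  · rintro ⟨a, b⟩ hab
    obtain ⟨σ, hσ⟩ := (IsStrictSegal.segal (m + n)).surjective
      ((X.spine m a).append (X.spine n b) (mem_segalCompatible_iff.1 hab))
    refine ⟨σ, Prod.ext (spine_inj ?_) (spine_inj ?_)⟩
    · rw [spine_segalPair_fst, hσ, Path.interval_append_left]
    · rw [spine_segalPair_snd, hσ, Path.interval_append_right]

end Segal

namespace SatisfiesSegal

variable {X : SSet.{u}}

/- The length `ℓ` is kept free so that these apply to `X _⦋n + 1⦌`, which is not definitionally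
`X _⦋1 + n⦌`. -/

lemma injective_of_add_eq (hX : SatisfiesSegal X) {m n ℓ : ℕ} (hℓ : m + n = ℓ) :
    Function.Injective fun σ : X _⦋ℓ⦌ ↦
      (X.map (subinterval 0 m (by omega)).op σ, X.map (subinterval m n (by omega)).op σ) := by
  subst hℓ
  simp only [← iota1_eq_subinterval, ← iota2_eq_subinterval]
  exact (hX m n).1

lemma exists_of_add_eq (hX : SatisfiesSegal X) {m n ℓ : ℕ} (hℓ : m + n = ℓ)
    {a : X _⦋m⦌} {b : X _⦋n⦌} (hab : (a, b) ∈ segalCompatible X m n) :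
    ∃ σ : X _⦋ℓ⦌, X.map (subinterval 0 m (by omega)).op σ = a ∧
      X.map (subinterval m n (by omega)).op σ = b := by
  subst hℓ
  obtain ⟨σ, hσ⟩ := (hX m n).2.symm ▸ hab
  simp only [← iota1_eq_subinterval, ← iota2_eq_subinterval]
  exact ⟨σ, Prod.ext_iff.1 hσ⟩

noncomputable def strictSegalCore (hX : SatisfiesSegal X) (n : ℕ) : X.StrictSegalCore n where
  concat x s h := (hX.exists_of_add_eq (add_comm 1 n) (mem_segalCompatible_of_δ_zero_eq h)).choose
  map_mkOfSucc_zero_concat x s h := by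
    rw [mkOfSucc_zero_eq_subinterval]
    exact (hX.exists_of_add_eq (add_comm 1 n) (mem_segalCompatible_of_δ_zero_eq h)).choose_spec.1
  δ₀_concat x s h := by
    rw [SimplicialObject.δ_def, δ_zero_eq_subinterval]
    exact (hX.exists_of_add_eq (add_comm 1 n) (mem_segalCompatible_of_δ_zero_eq h)).choose_spec.2
  injective h h₀ := by
    refine hX.injective_of_add_eq (add_comm 1 n) (Prod.ext ?_ ?_)
    · simpa only [mkOfSucc_zero_eq_subinterval] using h
    · simpa only [SimplicialObject.δ_def, δ_zero_eq_subinterval] using h₀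

noncomputable def strictSegal (hX : SatisfiesSegal X) : X.StrictSegal :=
  StrictSegal.ofCore hX.strictSegalCore

end SatisfiesSegal

namespace SSet.StrictSegal

variable {X : SSet.{u}} {x₀ x₁ x₂ x₃ : X _⦋0⦌} (sx : X.StrictSegal)

lemma δ_two_spineToSimplex_path₂ (f : Edge x₀ x₁) (g : Edge x₁ x₂) :
    X.δ 2 (sx.spineToSimplex (f.path₂ g)) = f.edge := by
  rw [← spine_arrow_zero_eq_δ, sx.spine_spineToSimplex_apply]
  rfl

lemma δ_zero_spineToSimplex_path₂ (f : Edge x₀ x₁) (g : Edge x₁ x₂) :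
    X.δ 0 (sx.spineToSimplex (f.path₂ g)) = g.edge := by
  rw [← spine_arrow_one_eq_δ, sx.spine_spineToSimplex_apply]
  rfl

noncomputable def comp (f : Edge x₀ x₁) (g : Edge x₁ x₂) : Edge x₀ x₂ :=
  Edge.mk (X.δ 1 (sx.spineToSimplex (f.path₂ g)))
    (by
      have := δ_comp_δ_self_apply (i := (1 : Fin 2)) (sx.spineToSimplex (f.path₂ g))
      simp only [Fin.reduceCastSucc, Fin.reduceSucc] at this
      rw [this, δ_two_spineToSimplex_path₂, f.src_eq])
    (by
      have := δ_comp_δ_apply (i := (0 : Fin 2)) (j := 0) le_rfl (sx.spineToSimplex (f.path₂ g))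
      simp only [Fin.reduceCastSucc, Fin.reduceSucc] at this
      rw [this, δ_zero_spineToSimplex_path₂, g.tgt_eq])

lemma δ_one_eq_comp {f : Edge x₀ x₁} {g : Edge x₁ x₂} {s : X _⦋2⦌}
    (h₂ : X.δ 2 s = f.edge) (h₀ : X.δ 0 s = g.edge) : X.δ 1 s = (sx.comp f g).edge := by
  rw [← sx.spineToSimplex_spine_apply s, spine_eq_path₂ h₂ h₀]
  rfl

lemma eq_comp {f : Edge x₀ x₁} {g : Edge x₁ x₂} {k : Edge x₀ x₂} (h : Edge.CompStruct f g k) :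
    k = sx.comp f g :=
  Edge.ext (h.d₁.symm.trans (sx.δ_one_eq_comp h.d₂ h.d₀))

lemma comp_assoc (f : Edge x₀ x₁) (g : Edge x₁ x₂) (h : Edge x₂ x₃) :
    sx.comp (sx.comp f g) h = sx.comp f (sx.comp g h) := by
  -- The faces `δ 3`, `δ 0`, `δ 1`, `δ 2` of the 3-simplex `τ` with spine `(f, g, h)` witness
  -- `f ≫ g`, `g ≫ h`, `(f ≫ g) ≫ h` and `f ≫ (g ≫ h)`; the last two share the edge `0 ⟶ 3` of `τ`.
  set τ := sx.spineToSimplex (f.path₃ g h)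
  have e₀₁ : X.δ 2 (X.δ 3 τ) = f.edge := by
    rw [← spine_arrow_zero_eq_δ, sx.spine_δ_arrow_lt _ (by decide)]; rfl
  have e₁₂ : X.δ 0 (X.δ 3 τ) = g.edge := by
    rw [← spine_arrow_one_eq_δ, sx.spine_δ_arrow_lt _ (by decide)]; rfl
  have e₁₂' : X.δ 2 (X.δ 0 τ) = g.edge := by
    rw [← spine_arrow_zero_eq_δ, sx.spine_δ_arrow_gt _ (by decide)]; rfl
  have e₂₃ : X.δ 0 (X.δ 0 τ) = h.edge := by
    rw [← spine_arrow_one_eq_δ, sx.spine_δ_arrow_gt _ (by decide)]; rfl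
  have e₀₁' : X.δ 2 (X.δ 2 τ) = f.edge := by
    rw [← spine_arrow_zero_eq_δ, sx.spine_δ_arrow_lt _ (by decide)]; rfl
  have e₂₃' : X.δ 0 (X.δ 1 τ) = h.edge := by
    rw [← spine_arrow_one_eq_δ, sx.spine_δ_arrow_gt _ (by decide)]; rfl
  have e₀₂ : X.δ 2 (X.δ 1 τ) = (sx.comp f g).edge := by
    have := δ_comp_δ_apply (n := 1) (i := 1) (j := 2) (by decide) τ
    simp only [Fin.reduceCastSucc, Fin.reduceSucc] at this
    rw [← this]
    exact sx.δ_one_eq_comp e₀₁ e₁₂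
  have e₁₃ : X.δ 0 (X.δ 2 τ) = (sx.comp g h).edge := by
    have := δ_comp_δ_apply (n := 1) (i := 0) (j := 1) (by decide) τ
    simp only [Fin.reduceCastSucc, Fin.reduceSucc] at this
    rw [this]
    exact sx.δ_one_eq_comp e₁₂' e₂₃
  ext
  rw [← sx.δ_one_eq_comp e₀₂ e₂₃', ← sx.δ_one_eq_comp e₀₁' e₁₃]
  exact δ_comp_δ_self_apply (i := 1) τ

/-- The vertices of `X`, under a separate name because `X _⦋0⦌` may already carry another
category structure (it does when `X` is a nerve). -/
def Obj (_ : X.StrictSegal) : Type u := X _⦋0⦌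

noncomputable instance : SmallCategory sx.Obj where
  Hom x y := Edge (X := X) x y
  id x := Edge.id (X := X) x
  comp f g := sx.comp f g
  id_comp f := (sx.eq_comp (.idComp f)).symm
  comp_id f := (sx.eq_comp (.compId f)).symm
  assoc f g h := sx.comp_assoc f g h

lemma edge_eqToHom_comp_comp_eqToHom {x y x' y' : sx.Obj} (hx : x' = x) (hy : y = y')
    (f : x ⟶ y) : Edge.edge (eqToHom hx ≫ f ≫ eqToHom hy) = Edge.edge f := by
  subst hx hy
  simp

variable {n : ℕ}

noncomputable def toComposableArrows (σ : X _⦋n⦌) : ComposableArrows sx.Obj n where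
  obj i := X.map (SimplexCategory.const ⦋0⦌ ⦋n⦌ i).op σ
  map {i j} hij := Edge.mk (X.map (mkOfLe i j (leOfHom hij)).op σ)
    (by rw [δ_map_apply, δ_one_comp_mkOfLe]) (by rw [δ_map_apply, δ_zero_comp_mkOfLe])
  map_id i := by
    apply Edge.ext
    change X.map (mkOfLe i i _).op σ = X.σ 0 _
    rw [mkOfLe_refl, SimplicialObject.σ_def, ← Functor.map_comp_apply, ← op_comp,
      σ_zero_comp_const]
  map_comp {i j k} hij hjk := sx.eq_comp <| .mk (X.map (mkOfLeComp i j k _ _).op σ)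
    (by rw [δ_map_apply, δ_two_comp_mkOfLeComp]; rfl)
    (by rw [δ_map_apply, δ_zero_comp_mkOfLeComp]; rfl)
    (by rw [δ_map_apply, δ_one_comp_mkOfLeComp]; rfl)

lemma toComposableArrows_map {m : ℕ} (α : ⦋m⦌ ⟶ ⦋n⦌) (σ : X _⦋n⦌) :
    sx.toComposableArrows (X.map α.op σ) = (nerve sx.Obj).map α.op (sx.toComposableArrows σ) := by
  have obj (i : Fin (m + 1)) : (sx.toComposableArrows (X.map α.op σ)).obj i =
      ((nerve sx.Obj).map α.op (sx.toComposableArrows σ)).obj i := by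
    change X.map _ (X.map _ σ) = X.map _ σ
    rw [← Functor.map_comp_apply, ← op_comp, SimplexCategory.const_comp]
    rfl
  refine CategoryTheory.Functor.ext obj fun i j hij ↦ Edge.ext ?_
  rw [edge_eqToHom_comp_comp_eqToHom]
  change X.map _ (X.map _ σ) = X.map _ σ
  rw [← Functor.map_comp_apply, ← op_comp, mkOfLe_comp]
  rfl

def pathOfComposableArrows (F : ComposableArrows sx.Obj n) : X.Path n where
  vertex := F.obj
  arrow i := Edge.edge (F.map (homOfLE i.castSucc_le_succ))
  arrow_src _ := Edge.src_eq _
  arrow_tgt _ := Edge.tgt_eq _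

lemma pathOfComposableArrows_toComposableArrows (σ : X _⦋n⦌) :
    sx.pathOfComposableArrows (sx.toComposableArrows σ) = X.spine n σ := by
  ext i
  · rfl
  · change X.map _ σ = X.map (mkOfSucc i).op σ
    rw [mkOfSucc_eq_mkOfLe]

lemma toComposableArrows_spineToSimplex (F : ComposableArrows sx.Obj n) :
    sx.toComposableArrows (sx.spineToSimplex (sx.pathOfComposableArrows F)) = F := by
  refine ComposableArrows.ext (fun i ↦ sx.spineToSimplex_vertex i _) fun i hi ↦ Edge.ext ?_
  refine Eq.trans ?_ (sx.edge_eqToHom_comp_comp_eqToHom _ _ (F.map' i (i + 1))).symm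
  exact sx.spineToSimplex_arrow ⟨i, hi⟩ _

noncomputable def toComposableArrowsEquiv : X _⦋n⦌ ≃ ComposableArrows sx.Obj n where
  toFun := sx.toComposableArrows
  invFun F := sx.spineToSimplex (sx.pathOfComposableArrows F)
  left_inv σ := by
    dsimp only
    rw [pathOfComposableArrows_toComposableArrows, spineToSimplex_spine_apply]
  right_inv := sx.toComposableArrows_spineToSimplex

noncomputable def isoNerve : X ≅ nerve sx.Obj :=
  NatIso.ofComponents (fun Δ ↦ (sx.toComposableArrowsEquiv (n := Δ.unop.len)).toIso)
    fun α ↦ by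
      ext σ
      exact sx.toComposableArrows_map α.unop σ

end SSet.StrictSegal

/-- The nerve of a small category satisfies the Segal condition (the canonical map
`N(C)_{m+n} → N(C)_m ×_{N(C)_0} N(C)_n` is a bijection), and conversely any simplicial
set satisfying the Segal condition is isomorphic to the nerve of a category. -/
theorem stmt5 :
    (∀ (C : Type u) [SmallCategory C], SatisfiesSegal (nerve C)) ∧
    (∀ X : SSet.{u}, SatisfiesSegal X →
      ∃ (C : Type u) (_ : SmallCategory C), Nonempty (X ≅ nerve C)) :=
  ⟨fun C _ ↦ satisfiesSegal_of_isStrictSegal (nerve C),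
    fun _ hX ↦ ⟨hX.strictSegal.Obj, inferInstance, ⟨hX.strictSegal.isoNerve⟩⟩⟩
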